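/- Let q be a prime, and let n = k₁ + k₂ + m. Let M : Fin (k₁ + k₂) → (Fin n → ℤ) × (Fin n → ℤ) be a CSS-form family: each of the first k₁ rows has Z-part identically zero, each of the last k₂ rows has X-part identically zero, and the X-parts of the first k₁ rows restricted to the first k₁ coordinates form the k₁×k₁ identity matrix. Suppose (M i) ⊙ (M j) is divisible by q for all i, j. Then there exists M' : Fin (k₁ + k₂) → (Fin n → ℤ) × (Fin n → ℤ) such that every entry of M' is congruent modulo q to the corresponding entry of M, (M' i) ⊙ (M' j) = 0 in ℤ for all i, j, each of the first k₁ rows of M' has Z-part identically zero, and each of the last k₂ rows of M' has X-part identically zero. (CSS codes remain CSS codes under the local-dimension-invariant transformation.) -/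

import Mathlib

/-! Keep the X-rows and correct each Z-row `z` to
`z - ∑ᵢ (z ⬝ᵥ xᵢ) eᵢ`, where `eᵢ` is the unit vector at the pivot column of the `i`-th X-row.
Since the X-rows are the identity on the pivot columns, the corrected row is orthogonal to every
X-row, and since every `z ⬝ᵥ xᵢ` is a symplectic product of two rows, hence divisible by `q`,
the correction vanishes modulo `q`. -/

/-- The symplectic product of two vectors `u v : (Fin n → R) × (Fin n → R)`,
where the first component is the X-part and the second the Z-part. -/
def symp {R : Type*} [CommRing R] {n : ℕ} (u v : (Fin n → R) × (Fin n → R)) : R :=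
  ∑ j, (v.2 j * u.1 j - v.1 j * u.2 j)

open Matrix

section Symplectic

variable {R : Type*} [CommRing R] {n : ℕ}

theorem symp_swap (u v : (Fin n → R) × (Fin n → R)) : symp v u = -symp u v := by
  simp only [symp, ← Finset.sum_neg_distrib]
  exact Finset.sum_congr rfl fun _ _ => by ring

theorem symp_of_snd_eq_zero {u v : (Fin n → R) × (Fin n → R)} (hu : u.2 = 0) (hv : v.2 = 0) :
    symp u v = 0 := by
  simp [symp, hu, hv]

theorem symp_of_fst_eq_zero {u v : (Fin n → R) × (Fin n → R)} (hu : u.1 = 0) (hv : v.1 = 0) :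
    symp u v = 0 := by
  simp [symp, hu, hv]

theorem symp_of_snd_eq_zero_of_fst_eq_zero {u v : (Fin n → R) × (Fin n → R)} (hu : u.2 = 0)
    (hv : v.1 = 0) : symp u v = v.2 ⬝ᵥ u.1 := by
  simp [symp, hu, hv, dotProduct]

end Symplectic

section Pivots

variable {ι κ R : Type*} [Fintype ι] [Fintype κ] [DecidableEq κ]

def reduceAtPivots [CommRing R] (x : ι → κ → R) (e : ι → κ) (z : κ → R) : κ → R :=
  z - ∑ i, (z ⬝ᵥ x i) • Pi.single (e i) 1

theorem reduceAtPivots_dotProduct [CommRing R] [DecidableEq ι] {x : ι → κ → R} {e : ι → κ}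
    (hx : ∀ i i', x i (e i') = if i = i' then 1 else 0) (z : κ → R) (i : ι) :
    reduceAtPivots x e z ⬝ᵥ x i = 0 := by
  simp [reduceAtPivots, sub_dotProduct, sum_dotProduct, smul_dotProduct, single_dotProduct, hx]

theorem reduceAtPivots_modEq {x : ι → κ → ℤ} (e : ι → κ) {z : κ → ℤ} {q : ℤ}
    (hz : ∀ i, q ∣ z ⬝ᵥ x i) (c : κ) : reduceAtPivots x e z c ≡ z c [ZMOD q] := by
  rw [Int.modEq_iff_dvd, reduceAtPivots, Pi.sub_apply, sub_sub_cancel, Finset.sum_apply]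
  exact Finset.dvd_sum fun i _ => (hz i).mul_right _

end Pivots

/-- CSS codes remain CSS codes under the local-dimension-invariant transformation. -/
theorem css_remains_css (q k₁ k₂ m : ℕ)
    (M : Fin (k₁ + k₂) → (Fin (k₁ + k₂ + m) → ℤ) × (Fin (k₁ + k₂ + m) → ℤ))
    (hZrows : ∀ i : Fin (k₁ + k₂), (i : ℕ) < k₁ → (M i).2 = 0)
    (hXrows : ∀ i : Fin (k₁ + k₂), k₁ ≤ (i : ℕ) → (M i).1 = 0)
    (hId : ∀ i i' : Fin (k₁ + k₂), (i : ℕ) < k₁ → (i' : ℕ) < k₁ →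
      (M i).1 (Fin.castLE (by omega) i') = if i = i' then 1 else 0)
    (hcomm : ∀ i j : Fin (k₁ + k₂), (q : ℤ) ∣ symp (M i) (M j)) :
    ∃ M' : Fin (k₁ + k₂) → (Fin (k₁ + k₂ + m) → ℤ) × (Fin (k₁ + k₂ + m) → ℤ),
      (∀ i : Fin (k₁ + k₂), ∀ j : Fin (k₁ + k₂ + m),
        (M' i).1 j ≡ (M i).1 j [ZMOD q] ∧ (M' i).2 j ≡ (M i).2 j [ZMOD q]) ∧
      (∀ i j : Fin (k₁ + k₂), symp (M' i) (M' j) = 0) ∧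
      (∀ i : Fin (k₁ + k₂), (i : ℕ) < k₁ → (M' i).2 = 0) ∧
      (∀ i : Fin (k₁ + k₂), k₁ ≤ (i : ℕ) → (M' i).1 = 0) := by
  set x : Fin k₁ → Fin (k₁ + k₂ + m) → ℤ := fun a => (M (Fin.castAdd k₂ a)).1
  set e : Fin k₁ → Fin (k₁ + k₂ + m) := fun a => Fin.castAdd m (Fin.castAdd k₂ a)
  have hx : ∀ a a', x a (e a') = if a = a' then 1 else 0 := fun a a' =>
    (hId (Fin.castAdd k₂ a) (Fin.castAdd k₂ a') a.2 a'.2).trans (by simp)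
  have hrow : ∀ i : Fin (k₁ + k₂), (hi : (i : ℕ) < k₁) → (M i).1 = x ⟨i, hi⟩ := fun _ _ => rfl
  set M' : Fin (k₁ + k₂) → (Fin (k₁ + k₂ + m) → ℤ) × (Fin (k₁ + k₂ + m) → ℤ) := fun i =>
    if (i : ℕ) < k₁ then M i else (0, reduceAtPivots x e (M i).2)
  have hXZ : ∀ i j : Fin (k₁ + k₂), (i : ℕ) < k₁ → k₁ ≤ (j : ℕ) → symp (M' i) (M' j) = 0 := by
    intro i j hi hj
    simp only [M', if_pos hi, if_neg (not_lt.2 hj)]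
    rw [symp_of_snd_eq_zero_of_fst_eq_zero (hZrows i hi) rfl, hrow i hi,
      reduceAtPivots_dotProduct hx]
  refine ⟨M', fun i c => ?_, fun i j => ?_, fun i hi => ?_, fun i hi => ?_⟩
  · by_cases hi : (i : ℕ) < k₁
    · simp [M', hi]
    · simp only [M', if_neg hi, hXrows i (not_lt.1 hi)]
      refine ⟨rfl, reduceAtPivots_modEq e (fun a => ?_) c⟩
      rw [← symp_of_snd_eq_zero_of_fst_eq_zero (hZrows _ a.2) (hXrows i (not_lt.1 hi))]
      exact hcomm _ _
  · rcases lt_or_ge (i : ℕ) k₁ with hi | hi <;> rcases lt_or_ge (j : ℕ) k₁ with hj | hj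
    · exact symp_of_snd_eq_zero (by simp [M', hi, hZrows]) (by simp [M', hj, hZrows])
    · exact hXZ i j hi hj
    · rw [symp_swap, hXZ j i hj hi, neg_zero]
    · exact symp_of_fst_eq_zero (by simp [M', not_lt.2 hi]) (by simp [M', not_lt.2 hj])
  · simp [M', hi, hZrows i hi]
  · simp [M', not_lt.2 hi]
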